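/- arXiv:0810.0191 — 3 statements merged into one kernel-verified Lean document; each statement's English description precedes it below -/
import Mathlib

section
/- (Helly's selection principle for pointwise convergence) If (f_n) is a sequence of non-increasing functions from [0,∞) to ℝ, then there exist a non-increasing function g: [0,∞) → [-∞,∞] and a subsequence (f_{n'}) such that f_{n'}(t) converges to g(t) for every t ∈ [0,∞). -/
open Filter Topology

theorem stmt1 (f : ℕ → ℝ → ℝ) (hf : ∀ n, AntitoneOn (f n) (Set.Ici 0)) :
    ∃ (g : ℝ → EReal) (ns : ℕ → ℕ), AntitoneOn g (Set.Ici 0) ∧ StrictMono ns ∧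
      ∀ t ≥ (0:ℝ), Filter.Tendsto (fun k => ((f (ns k) t : ℝ) : EReal))
        Filter.atTop (nhds (g t)) := by
  classical
  -- replace f by a globally antitone version
  set fc : ℕ → ℝ → ℝ := fun n x => f n (max x 0) with hfc_def
  have hfc : ∀ n, Antitone (fc n) := fun n x y hxy =>
    hf n (le_max_right x 0) (le_max_right y 0) (max_le_max hxy le_rfl)
  -- first extraction: convergence at all rationals
  obtain ⟨L, φ, hφ, hLconv⟩ := SeqCompactSpace.tendsto_subseq
    (X := ℚ → EReal) (fun n q => ((fc n (q : ℝ) : ℝ) : EReal))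
  have hL : ∀ q : ℚ, Tendsto (fun k => ((fc (φ k) (q : ℝ) : ℝ) : EReal)) atTop (𝓝 (L q)) :=
    fun q => tendsto_pi_nhds.mp hLconv q
  have hLanti : ∀ q q' : ℚ, q ≤ q' → L q' ≤ L q := fun q q' hqq' =>
    le_of_tendsto_of_tendsto' (hL q') (hL q)
      (fun k => EReal.coe_le_coe_iff.mpr (hfc (φ k) (by exact_mod_cast hqq')))
  -- right and left "limits" along rationals
  set G : ℝ → EReal := fun t => ⨆ (q : ℚ) (_ : t < (q : ℝ)), L q with hG_def
  set H : ℝ → EReal := fun t => ⨅ (q : ℚ) (_ : (q : ℝ) < t), L q with hH_def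
  have hGH : ∀ t, G t ≤ H t := by
    intro t
    refine iSup₂_le fun q hq => le_iInf₂ fun q' hq' => hLanti q' q ?_
    exact_mod_cast (hq'.trans hq).le
  have hGanti : Antitone G := by
    intro t1 t2 h
    exact iSup₂_le fun q hq => le_iSup₂ (f := fun (q : ℚ) (_ : t1 < (q : ℝ)) => L q) q
      (lt_of_le_of_lt h hq)
  have hsep : ∀ t1 t2 : ℝ, t1 < t2 → H t2 ≤ G t1 := by
    intro t1 t2 h
    obtain ⟨q, hq1, hq2⟩ := exists_rat_btwn h
    exact (iInf₂_le q hq2).trans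
      (le_iSup₂ (f := fun (q : ℚ) (_ : t1 < (q : ℝ)) => L q) q hq1)
  -- the bad set is countable
  set B : Set ℝ := {t : ℝ | G t ≠ H t} with hB_def
  have hpick : ∀ t ∈ B, ∃ q : ℚ, G t < ((q : ℝ) : EReal) ∧ ((q : ℝ) : EReal) < H t := fun t ht =>
    EReal.exists_rat_btwn_of_lt ((hGH t).lt_of_ne ht)
  choose! r hr1 hr2 using hpick
  have hBcount : B.Countable := by
    refine Set.countable_iff_exists_injOn.mpr ⟨fun t => Encodable.encode (r t), ?_⟩
    intro t1 ht1 t2 ht2 henc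
    have hreq : r t1 = r t2 := Encodable.encode_injective henc
    by_contra hne
    rcases lt_or_gt_of_ne hne with hlt | hlt
    · have h1 : ((r t2 : ℝ) : EReal) < H t2 := hr2 t2 ht2
      have h2 : G t1 < ((r t1 : ℝ) : EReal) := hr1 t1 ht1
      rw [hreq] at h2
      exact absurd (h1.trans_le ((hsep t1 t2 hlt).trans h2.le)) (lt_irrefl _)
    · have h1 : ((r t1 : ℝ) : EReal) < H t1 := hr2 t1 ht1
      have h2 : G t2 < ((r t2 : ℝ) : EReal) := hr1 t2 ht2
      rw [← hreq] at h2
      exact absurd (h1.trans_le ((hsep t2 t1 hlt).trans h2.le)) (lt_irrefl _)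
  have : Countable B := hBcount.to_subtype
  -- second extraction: convergence on the bad set
  obtain ⟨M, ψ, hψ, hMconv⟩ := SeqCompactSpace.tendsto_subseq
    (X := B → EReal) (fun k (d : B) => ((fc (φ k) (d : ℝ) : ℝ) : EReal))
  have hM : ∀ d : B, Tendsto (fun k => ((fc (φ (ψ k)) (d : ℝ) : ℝ) : EReal)) atTop (𝓝 (M d)) :=
    fun d => tendsto_pi_nhds.mp hMconv d
  set ns : ℕ → ℕ := φ ∘ ψ with hns_def
  have hns : StrictMono ns := hφ.comp hψ
  have hL2 : ∀ q : ℚ, Tendsto (fun k => ((fc (ns k) (q : ℝ) : ℝ) : EReal)) atTop (𝓝 (L q)) :=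
    fun q => (hL q).comp hψ.tendsto_atTop
  have hLM : ∀ (d : B) (q : ℚ), (d : ℝ) < (q : ℝ) → L q ≤ M d := fun d q hq =>
    le_of_tendsto_of_tendsto' (hL2 q) (hM d)
      (fun k => EReal.coe_le_coe_iff.mpr (hfc (ns k) hq.le))
  have hML : ∀ (d : B) (q : ℚ), (q : ℝ) < (d : ℝ) → M d ≤ L q := fun d q hq =>
    le_of_tendsto_of_tendsto' (hM d) (hL2 q)
      (fun k => EReal.coe_le_coe_iff.mpr (hfc (ns k) hq.le))
  have hMM : ∀ d d' : B, (d : ℝ) ≤ (d' : ℝ) → M d' ≤ M d := fun d d' h =>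
    le_of_tendsto_of_tendsto' (hM d') (hM d)
      (fun k => EReal.coe_le_coe_iff.mpr (hfc (ns k) h))
  refine ⟨fun t => if h : t ∈ B then M ⟨t, h⟩ else G t, ns, ?_, hns, ?_⟩
  · -- antitone
    refine Antitone.antitoneOn ?_ _
    intro t1 t2 h12
    rcases h12.eq_or_lt with rfl | hlt
    · exact le_rfl
    by_cases h1 : t1 ∈ B <;> by_cases h2 : t2 ∈ B <;>
      simp only [dif_pos, dif_neg, h1, h2, dite_true, dite_false]
    · exact hMM ⟨t1, h1⟩ ⟨t2, h2⟩ hlt.le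
    · exact iSup₂_le fun q hq => hLM ⟨t1, h1⟩ q (hlt.trans hq)
    · obtain ⟨q, hq1, hq2⟩ := exists_rat_btwn hlt
      exact (hML ⟨t2, h2⟩ q hq2).trans
        (le_iSup₂ (f := fun (q : ℚ) (_ : t1 < (q : ℝ)) => L q) q hq1)
    · exact hGanti hlt.le
  · -- convergence
    intro t ht
    have hmax : max t 0 = t := max_eq_left ht
    have heq : (fun k => ((f (ns k) t : ℝ) : EReal))
        = fun k => ((fc (ns k) t : ℝ) : EReal) := by
      simp only [hfc_def, hmax]
    rw [heq]
    by_cases hB : t ∈ B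
    · simp only [dif_pos hB]
      exact hM ⟨t, hB⟩
    · simp only [dif_neg hB]
      have hGt : G t = H t := not_not.mp hB
      refine tendsto_of_le_liminf_of_limsup_le ?_ ?_
      · refine iSup₂_le fun q hq => ?_
        rw [← (hL2 q).liminf_eq]
        exact liminf_le_liminf (Eventually.of_forall fun k =>
          EReal.coe_le_coe_iff.mpr (hfc (ns k) hq.le))
      · rw [hGt]
        refine le_iInf₂ fun q hq => ?_
        rw [← (hL2 q).limsup_eq]
        exact limsup_le_limsup (Eventually.of_forall fun k =>
          EReal.coe_le_coe_iff.mpr (hfc (ns k) hq.le))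
end

section
/- Let V be a real normed space with dual V*, ψ: V → (-∞,∞] proper lower semicontinuous convex with ψ ≥ 0, p ∈ (1,∞) with conjugate p', and suppose there are constants C₃, C₄ ≥ 0 such that |η|_{V*}^{p'} ≤ C₃ ψ(u) + C₄ whenever η ∈ ∂ψ(u). Then there exists a constant C₅ ≥ 0 such that (1/2) ψ(u) ≤ ⟨η, u⟩ + C₅ for all u ∈ D(∂ψ) and η ∈ ∂ψ(u). -/
/-!
Fix `v₀` with `ψ v₀ < ∞`. The subgradient inequality at `v₀` gives
`ψ u ≤ ⟨η, u⟩ + ‖η‖ ‖v₀‖ + ψ v₀`, and Young's inequality with a small weight `ε` bounds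
`‖η‖ ‖v₀‖ ≤ ε ‖η‖^{p'} + K_ε ≤ ε (C₃ ψ u + C₄) + K_ε`. Choosing `ε C₃ ≤ 1/2` absorbs the
`ψ u` on the right into the left-hand side.
-/

open NormedSpace

theorem Real.mul_le_mul_rpow_add_div_rpow_of_holderConjugate {p q ε x y : ℝ}
    (hpq : p.HolderConjugate q) (hε : 0 < ε) (hx : 0 ≤ x) (hy : 0 ≤ y) :
    x * y ≤ ε * x ^ p + (y / ε ^ p⁻¹) ^ q / q := by
  have hc : 0 < ε ^ p⁻¹ := Real.rpow_pos_of_pos hε _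
  have hyoung := Real.young_inequality_of_nonneg (mul_nonneg hc.le hx) (div_nonneg hy hc.le) hpq
  have hprod : ε ^ p⁻¹ * x * (y / ε ^ p⁻¹) = x * y := by field_simp
  have hpow : (ε ^ p⁻¹ * x) ^ p = ε * x ^ p := by
    rw [Real.mul_rpow hc.le hx, Real.rpow_inv_rpow hε.le hpq.ne_zero]
  have hdiv : ε * x ^ p / p ≤ ε * x ^ p := div_le_self (by positivity) hpq.lt.le
  rw [hprod, hpow] at hyoung
  linarith

section Subgradient

variable {V : Type*} [NormedAddCommGroup V] [NormedSpace ℝ V]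

/-- `η ∈ ∂ψ(u)`, for an extended-real valued `ψ`. -/
def IsSubgradient (ψ : V → EReal) (u : V) (η : StrongDual ℝ V) : Prop :=
  ψ u ≠ ⊤ ∧ ∀ v, ((η (v - u) : ℝ) : EReal) ≤ ψ v - ψ u

theorem IsSubgradient.le_add_norm_mul {ψ : V → EReal} {u v : V} {η : StrongDual ℝ V}
    (h : IsSubgradient ψ u η) {a b : ℝ} (hu : ψ u = a) (hv : ψ v = b) :
    a ≤ η u + ‖η‖ * ‖v‖ + b := by
  have hsub : η (v - u) ≤ b - a := by
    have := h.2 v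
    rwa [hu, hv, ← EReal.coe_sub, EReal.coe_le_coe_iff] at this
  have hv_le : -η v ≤ ‖η‖ * ‖v‖ := (neg_le_abs _).trans (η.le_opNorm v)
  rw [map_sub] at hsub
  linarith

end Subgradient

theorem stmt5_general {V : Type*} [NormedAddCommGroup V] [NormedSpace ℝ V]
    (ψ : V → EReal) (hpos : ∀ v, (0 : EReal) ≤ ψ v) (hproper : ∃ v, ψ v ≠ ⊤)
    (p : ℝ) (hp : 1 < p) (p' : ℝ) (hp' : p' = p / (p - 1))
    (C₃ C₄ : ℝ) (hC₃ : 0 ≤ C₃) (hC₄ : 0 ≤ C₄)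
    (hgrowth : ∀ (u : V) (η : StrongDual ℝ V),
      (ψ u ≠ ⊤ ∧ ∀ v, ((η (v - u) : ℝ) : EReal) ≤ ψ v - ψ u) →
      ((‖η‖ ^ p' : ℝ) : EReal) ≤ (C₃ : EReal) * ψ u + (C₄ : EReal)) :
    ∃ C₅ : ℝ, 0 ≤ C₅ ∧ ∀ (u : V) (η : StrongDual ℝ V),
      (ψ u ≠ ⊤ ∧ ∀ v, ((η (v - u) : ℝ) : EReal) ≤ ψ v - ψ u) →
      ((1 / 2 : ℝ) : EReal) * ψ u ≤ ((η u : ℝ) : EReal) + (C₅ : EReal) := by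
  have hbot : ∀ v, ψ v ≠ ⊥ := fun v => ne_bot_of_le_ne_bot EReal.zero_ne_bot (hpos v)
  obtain ⟨v₀, hv₀⟩ := hproper
  obtain ⟨b, hb⟩ : ∃ b : ℝ, ψ v₀ = b := ⟨_, (EReal.coe_toReal hv₀ (hbot v₀)).symm⟩
  have hb0 : 0 ≤ b := by exact_mod_cast hb ▸ hpos v₀
  have hconj : p'.HolderConjugate p :=
    ((Real.holderConjugate_iff_eq_conjExponent hp).2 hp').symm
  set ε : ℝ := 1 / (2 * (C₃ + 1))
  set K : ℝ := (‖v₀‖ / ε ^ p'⁻¹) ^ p / p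
  refine ⟨b + ε * C₄ + K, by positivity, fun u η hη => ?_⟩
  obtain ⟨a, ha⟩ : ∃ a : ℝ, ψ u = a := ⟨_, (EReal.coe_toReal hη.1 (hbot u)).symm⟩
  have ha0 : 0 ≤ a := by exact_mod_cast ha ▸ hpos u
  have hsub : a ≤ η u + ‖η‖ * ‖v₀‖ + b := IsSubgradient.le_add_norm_mul hη ha hb
  have hgrow : ‖η‖ ^ p' ≤ C₃ * a + C₄ := by
    have := hgrowth u η hη
    rwa [ha, ← EReal.coe_mul, ← EReal.coe_add, EReal.coe_le_coe_iff] at this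
  have hyoung : ‖η‖ * ‖v₀‖ ≤ ε * ‖η‖ ^ p' + K :=
    Real.mul_le_mul_rpow_add_div_rpow_of_holderConjugate hconj (by positivity)
      (norm_nonneg _) (norm_nonneg _)
  have habsorb : ε * (C₃ * a) ≤ 1 / 2 * a := by
    rw [← mul_assoc]
    gcongr
    rw [div_mul_eq_mul_div, one_mul, div_le_div_iff₀ (by positivity) two_pos]
    linarith
  rw [ha, ← EReal.coe_mul, ← EReal.coe_add, EReal.coe_le_coe_iff]
  nlinarith [mul_le_mul_of_nonneg_left hgrow (by positivity : (0 : ℝ) ≤ ε)]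

theorem stmt5 {V : Type*} [NormedAddCommGroup V] [NormedSpace ℝ V]
    (ψ : V → EReal) (hpos : ∀ v, (0 : EReal) ≤ ψ v) (hproper : ∃ v, ψ v ≠ ⊤)
    (hlsc : LowerSemicontinuous ψ)
    (hconv : ∀ u v : V, ∀ a b : ℝ, 0 ≤ a → 0 ≤ b → a + b = 1 →
      ψ (a • u + b • v) ≤ (a : EReal) * ψ u + (b : EReal) * ψ v)
    (p : ℝ) (hp : 1 < p) (p' : ℝ) (hp' : p' = p / (p - 1))
    (C₃ C₄ : ℝ) (hC₃ : 0 ≤ C₃) (hC₄ : 0 ≤ C₄)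
    (hgrowth : ∀ (u : V) (η : StrongDual ℝ V),
      (ψ u ≠ ⊤ ∧ ∀ v, ((η (v - u) : ℝ) : EReal) ≤ ψ v - ψ u) →
      ((‖η‖ ^ p' : ℝ) : EReal) ≤ (C₃ : EReal) * ψ u + (C₄ : EReal)) :
    ∃ C₅ : ℝ, 0 ≤ C₅ ∧ ∀ (u : V) (η : StrongDual ℝ V),
      (ψ u ≠ ⊤ ∧ ∀ v, ((η (v - u) : ℝ) : EReal) ≤ ψ v - ψ u) →
      ((1 / 2 : ℝ) : EReal) * ψ u ≤ ((η u : ℝ) : EReal) + (C₅ : EReal) :=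
  stmt5_general ψ hpos hproper p hp p' hp' C₃ C₄ hC₃ hC₄ hgrowth
end

section
/- Let X be a metric space and G a generalized semiflow on X. If G is eventually bounded and compact, then G is asymptotically compact: for any sequences (φ_n) in G and (t_n) in [0,∞) with (φ_n(0)) bounded in X and t_n → ∞, the sequence (φ_n(t_n)) has a convergent subsequence in X. -/
open Filter Topology

/-- A generalized semiflow in the sense of J.M. Ball: a family of maps
`[0,∞) → X` satisfying existence (H1), translation invariance (H2),
concatenation invariance (H3) and upper semicontinuity (H4). -/
structure GenSemiflow (X : Type*) [MetricSpace X] where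
  carrier : Set (NNReal → X)
  exists_orbit : ∀ x : X, ∃ φ ∈ carrier, φ 0 = x
  translation : ∀ φ ∈ carrier, ∀ τ : NNReal, (fun t => φ (t + τ)) ∈ carrier
  concat : ∀ φ₁ ∈ carrier, ∀ φ₂ ∈ carrier, ∀ τ : NNReal, φ₂ 0 = φ₁ τ →
    (fun t => if t ≤ τ then φ₁ t else φ₂ (t - τ)) ∈ carrier
  usc : ∀ (φn : ℕ → NNReal → X) (x : X), (∀ n, φn n ∈ carrier) →
    Tendsto (fun n => φn n 0) atTop (nhds x) →
    ∃ ns : ℕ → ℕ, StrictMono ns ∧ ∃ φ ∈ carrier,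
      ∀ t, Tendsto (fun k => φn (ns k) t) atTop (nhds (φ t))

/-- The multivalued evolution operator `T(t)E = {φ(t) : φ ∈ G, φ(0) ∈ E}`. -/
def GenSemiflow.T {X : Type*} [MetricSpace X] (G : GenSemiflow X)
    (t : NNReal) (E : Set X) : Set X :=
  {y | ∃ φ ∈ G.carrier, φ 0 ∈ E ∧ φ t = y}

/-- A global attractor: a compact, fully invariant set attracting all bounded sets,
where attraction is measured by `dist(T(t)B, A) = sup_{x ∈ T(t)B} inf_{a ∈ A} d(x,a)`. -/
def GenSemiflow.IsGlobalAttractor {X : Type*} [MetricSpace X] (G : GenSemiflow X)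
    (A : Set X) : Prop :=
  IsCompact A ∧ (∀ t : NNReal, G.T t A = A) ∧
    ∀ B : Set X, Bornology.IsBounded B →
      Tendsto (fun t : NNReal => ⨆ x ∈ G.T t B, EMetric.infEdist x A) atTop (nhds 0)


theorem stmt12 {X : Type*} [MetricSpace X] (G : GenSemiflow X)
    (hev : ∀ D : Set X, Bornology.IsBounded D → ∃ (τ : NNReal) (B : Set X),
      Bornology.IsBounded B ∧ ∀ t ≥ τ, G.T t D ⊆ B)
    (hcpt : ∀ u : ℕ → NNReal → X, (∀ n, u n ∈ G.carrier) →
      Bornology.IsBounded (Set.range fun n => u n 0) →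
      ∃ ns : ℕ → ℕ, StrictMono ns ∧ ∀ t : NNReal, 0 < t →
        ∃ x : X, Tendsto (fun k => u (ns k) t) atTop (nhds x)) :
    ∀ (φ : ℕ → NNReal → X) (tn : ℕ → NNReal), (∀ n, φ n ∈ G.carrier) →
      Bornology.IsBounded (Set.range fun n => φ n 0) →
      Tendsto tn atTop atTop →
      ∃ (ns : ℕ → ℕ) (x : X), StrictMono ns ∧
        Tendsto (fun k => φ (ns k) (tn (ns k))) atTop (nhds x) := by
  intro φ tn hφ hbdd htn
  obtain ⟨τ, B, hBb, hB⟩ := hev _ hbdd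
  obtain ⟨N, hN⟩ := Filter.eventually_atTop.mp (htn.eventually_ge_atTop (τ + 1))
  set m : ℕ → ℕ := fun n => n + N with hm
  have hmmono : StrictMono m := fun a b h => by simp [hm]; omega
  have hle : ∀ n, τ + 1 ≤ tn (m n) := fun n => hN _ (Nat.le_add_left N n)
  have h1 : ∀ n, (1 : NNReal) ≤ tn (m n) := fun n =>
    le_trans (le_add_self) (hle n)
  have hτ : ∀ n, τ ≤ tn (m n) - 1 := fun n => le_tsub_of_add_le_right (hle n)
  set u : ℕ → NNReal → X := fun n t => φ (m n) (t + (tn (m n) - 1)) with hu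
  have hucar : ∀ n, u n ∈ G.carrier := fun n => G.translation _ (hφ _) _
  have hu0 : ∀ n, u n 0 ∈ B := fun n =>
    hB _ (hτ n) ⟨φ (m n), hφ _, ⟨m n, rfl⟩, by simp [hu]⟩
  have hubdd : Bornology.IsBounded (Set.range fun n => u n 0) :=
    hBb.subset (by rintro _ ⟨n, rfl⟩; exact hu0 n)
  obtain ⟨ns, hns, hconv⟩ := hcpt u hucar hubdd
  obtain ⟨x, hx⟩ := hconv 1 one_pos
  refine ⟨m ∘ ns, x, hmmono.comp hns, ?_⟩
  exact hx.congr fun k => by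
    simp only [hu, Function.comp]
    rw [add_tsub_cancel_of_le (h1 (ns k))]
end
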